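/- Let ρ be a density matrix on ℂ^d with von Neumann entropy S(ρ) = −Tr(ρ log₂ ρ), and fix R < S(ρ). For every δ > 0 there exists N₀ ∈ ℕ such that for every N ≥ N₀ and every orthogonal projection S_N on (ℂ^d)^{⊗N} with Tr(S_N) < 2^{NR}, one has Tr[ S_N ρ^{⊗N} ] ≤ δ, where ρ^{⊗N} is the N-fold Kronecker (tensor) power of ρ. -/

import Mathlib

open Matrix
open scoped ComplexOrder

noncomputable section

/-- `N`-fold tensor (Kronecker) power of a matrix. -/
def tpow {d : Type*} (ρ : Matrix d d ℂ) (N : ℕ) : Matrix (Fin N → d) (Fin N → d) ℂ :=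
  Matrix.of fun a b => ∏ k, ρ (a k) (b k)

/-- The von Neumann entropy `S(ρ) = −Tr(ρ log₂ ρ) = −Σ_x p_x log₂ p_x`, computed from the
eigenvalues of a Hermitian matrix. -/
def vnEntropy {n : Type*} [Fintype n] [DecidableEq n] {ρ : Matrix n n ℂ}
    (hρ : ρ.IsHermitian) : ℝ :=
  -∑ i, hρ.eigenvalues i * Real.logb 2 (hρ.eigenvalues i)

/-!
Diagonalize `ρ = U diag(p) U*`. Then `ρ^{⊗N} = U^{⊗N} diag(p^N) (U^{⊗N})*`, where
`p^N(x) = ∏ₖ p(xₖ)`, and conjugating `S_N` by the unitary `U^{⊗N}` gives a projection with the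
same trace whose diagonal entries `s(x)` lie in `[0, 1]`; so `Tr[S_N ρ^{⊗N}] = ∑ₓ s(x) p^N(x)`
with `∑ₓ s(x) < 2^{NR}`. With `H = S(ρ)` and `ε = (H - R)/2`, the sequences with
`p^N(x) ≤ 2^{-N(H-ε)}` contribute at most `2^{NR} 2^{-N(H-ε)} = 2^{-Nε}`. For the others the sum
of the i.i.d. centred log-likelihoods `log₂ p(xₖ) + H` exceeds `Nε`, so by Chebyshev's
inequality their total probability is at most `V/(Nε²)`, `V` being the variance of `log₂ p`.
-/

open Finset Filter Topology

section TensorPower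

variable {d : Type*}

theorem tpow_conjTranspose (A : Matrix d d ℂ) (N : ℕ) : tpow Aᴴ N = (tpow A N)ᴴ := by
  ext a b
  simp only [tpow, conjTranspose_apply, of_apply, star_prod]

theorem tpow_diagonal [DecidableEq d] (p : d → ℂ) (N : ℕ) :
    tpow (diagonal p) N = diagonal fun x : Fin N → d => ∏ k, p (x k) := by
  ext a b
  by_cases hab : a = b
  · subst hab; simp [tpow]
  · obtain ⟨k, hk⟩ := Function.ne_iff.mp hab
    rw [diagonal_apply_ne _ hab]
    exact prod_eq_zero (mem_univ k) (diagonal_apply_ne _ hk)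

theorem tpow_one [DecidableEq d] (N : ℕ) : tpow (1 : Matrix d d ℂ) N = 1 := by
  simpa using tpow_diagonal (fun _ : d => (1 : ℂ)) N

variable [Fintype d]

theorem tpow_mul (A B : Matrix d d ℂ) (N : ℕ) : tpow (A * B) N = tpow A N * tpow B N := by
  ext a b
  simp only [tpow, mul_apply, of_apply, Fintype.prod_sum, prod_mul_distrib]

theorem tpow_mem_unitary [DecidableEq d] {U : Matrix d d ℂ} (hU : U ∈ unitary (Matrix d d ℂ))
    (N : ℕ) : tpow U N ∈ unitary _ := by
  rw [Unitary.mem_iff, star_eq_conjTranspose, ← tpow_conjTranspose, ← tpow_mul, ← tpow_mul,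
    ← star_eq_conjTranspose, Unitary.star_mul_self_of_mem hU, Unitary.mul_star_self_of_mem hU,
    tpow_one]
  exact ⟨rfl, rfl⟩

end TensorPower

section Reduction

open scoped MatrixOrder

variable {n : Type*} [Fintype n] [DecidableEq n]

theorem re_diag_mem_Icc_of_isStarProjection {P : Matrix n n ℂ} (hP : IsStarProjection P)
    (i : n) : (P i i).re ∈ Set.Icc 0 1 := by
  have h0 : 0 ≤ P i i := hP.nonneg.posSemidef.diag_nonneg
  have h1 : 0 ≤ (1 - P) i i := hP.one_sub_nonneg.posSemidef.diag_nonneg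
  rw [Matrix.sub_apply, one_apply_eq, sub_nonneg] at h1
  exact ⟨(Complex.nonneg_iff.mp h0).1, by simpa using (Complex.le_def.mp h1).1⟩

theorem re_trace_mul_diagonal_ofReal (A : Matrix n n ℂ) (q : n → ℝ) :
    (A * diagonal fun i => (q i : ℂ)).trace.re = ∑ i, (A i i).re * q i := by
  simp [trace, Complex.re_sum]

theorem exists_weights_of_isStarProjection {d : Type*} [Fintype d] [DecidableEq d]
    {ρ : Matrix d d ℂ} (hρ : ρ.IsHermitian) {N : ℕ} {P : Matrix (Fin N → d) (Fin N → d) ℂ}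
    (hP : IsStarProjection P) :
    ∃ s : (Fin N → d) → ℝ, (∀ x, s x ∈ Set.Icc 0 1) ∧ ∑ x, s x = P.trace.re ∧
      (P * tpow ρ N).trace.re = ∑ x, s x * ∏ k, hρ.eigenvalues (x k) := by
  let W := tpow (hρ.eigenvectorUnitary : Matrix d d ℂ) N
  have hW : W ∈ unitary _ := tpow_mem_unitary hρ.eigenvectorUnitary.2 N
  have hρN :
      tpow ρ N = W * diagonal (fun x => ((∏ k, hρ.eigenvalues (x k) : ℝ) : ℂ)) * star W := by
    conv_lhs => rw [hρ.spectral_theorem]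
    simp [W, tpow_mul, star_eq_conjTranspose, tpow_conjTranspose, tpow_diagonal]
  have hP' : IsStarProjection (star W * P * W) :=
    Unitary.conjStarAlgAut_star_apply (S := ℂ) ⟨W, hW⟩ P ▸ hP.map _
  refine ⟨fun x => ((star W * P * W) x x).re, re_diag_mem_Icc_of_isStarProjection hP', ?_, ?_⟩
  · rw [← Complex.re_sum]
    change (star W * P * W).trace.re = _
    rw [trace_mul_cycle, Unitary.mul_star_self_of_mem hW, one_mul]
  · rw [← re_trace_mul_diagonal_ofReal, hρN, ← mul_assoc, trace_mul_cycle, ← mul_assoc]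

end Reduction

theorem sum_le_sum_mul_sq_div_sq {ι : Type*} [Fintype ι] {q : ι → ℝ} (hq : ∀ x, 0 ≤ q x)
    (f : ι → ℝ) {c : ℝ} (hc : 0 < c) {A : Finset ι} (hA : ∀ x ∈ A, c ≤ f x) :
    ∑ x ∈ A, q x ≤ (∑ x, q x * f x ^ 2) / c ^ 2 := by
  rw [le_div_iff₀ (by positivity), sum_mul]
  calc ∑ x ∈ A, q x * c ^ 2
      ≤ ∑ x ∈ A, q x * f x ^ 2 :=
        sum_le_sum fun x hx => mul_le_mul_of_nonneg_left (pow_le_pow_left₀ hc.le (hA x hx) 2) (hq x)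
    _ ≤ ∑ x, q x * f x ^ 2 :=
        sum_le_sum_of_subset_of_nonneg (subset_univ A) fun x _ _ => mul_nonneg (hq x) (sq_nonneg _)

theorem lt_sum_logb_of_rpow_lt_prod {ι : Type*} [Fintype ι] {p : ι → ℝ} {t : ℝ}
    (ht : (2 : ℝ) ^ t < ∏ i, p i) : t < ∑ i, Real.logb 2 (p i) := by
  have hprod : 0 < ∏ i, p i := (Real.rpow_pos_of_pos two_pos t).trans ht
  rw [← Real.logb_prod _ _ fun i _ => prod_ne_zero_iff.mp hprod.ne' i (mem_univ i)]
  exact (Real.lt_logb_iff_rpow_lt one_lt_two hprod).mpr ht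

section Product

variable {α ι : Type*} [Fintype α] [Fintype ι] [DecidableEq ι]

theorem sum_prod_mul_mul_of_sum_mul_eq_zero {p h : α → ℝ} (hp : ∑ a, p a = 1)
    (hph : ∑ a, p a * h a = 0) (k l : ι) :
    ∑ x : ι → α, (∏ m, p (x m)) * (h (x k) * h (x l)) =
      if k = l then ∑ a, p a * h a ^ 2 else 0 := by
  -- the summand is a product over coordinates, so the sum over `x` factorizes
  let g : ι → α → ℝ := fun m a => p a * (if m = k then h a else 1) * (if m = l then h a else 1)
  have hg : ∀ x : ι → α, (∏ m, p (x m)) * (h (x k) * h (x l)) = ∏ m, g m (x m) := by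
    intro x
    simp only [g, prod_mul_distrib, prod_ite_eq', mem_univ, if_true, mul_assoc]
  simp_rw [hg, ← Fintype.prod_sum]
  split_ifs with hkl
  · subst hkl
    rw [prod_eq_single k fun m _ hm => by simpa [g, hm] using hp]
    · simp [g, sq, mul_assoc]
    · simp
  · exact prod_eq_zero (mem_univ k) (by simpa [g, hkl] using hph)

theorem sum_prod_mul_sum_sq_of_sum_mul_eq_zero {p h : α → ℝ} (hp : ∑ a, p a = 1)
    (hph : ∑ a, p a * h a = 0) :
    ∑ x : ι → α, (∏ m, p (x m)) * (∑ k, h (x k)) ^ 2 =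
      Fintype.card ι * ∑ a, p a * h a ^ 2 := by
  simp_rw [sq, sum_mul_sum, mul_sum]
  rw [sum_comm]
  simp_rw [sum_comm (s := univ (α := ι → α)), sum_prod_mul_mul_of_sum_mul_eq_zero hp hph]
  simp [mul_sum, sq]

end Product

section Entropy

variable {α : Type*} [Fintype α]

def shannonEntropy (p : α → ℝ) : ℝ :=
  -∑ a, p a * Real.logb 2 (p a)

def varentropy (p : α → ℝ) : ℝ :=
  ∑ a, p a * (Real.logb 2 (p a) + shannonEntropy p) ^ 2

theorem sum_prod_filter_rpow_lt_le {p : α → ℝ} (hp0 : ∀ a, 0 ≤ p a) (hp1 : ∑ a, p a = 1)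
    {ε : ℝ} (hε : 0 < ε) {N : ℕ} (hN : 0 < N) :
    ∑ x ∈ univ.filter fun x : Fin N → α =>
        (2 : ℝ) ^ (-(N * (shannonEntropy p - ε))) < ∏ k, p (x k), ∏ k, p (x k) ≤
      varentropy p / (N * ε ^ 2) := by
  set H := shannonEntropy p with hH
  have hcentered : ∑ a, p a * (Real.logb 2 (p a) + H) = 0 := by
    simp only [mul_add, sum_add_distrib, ← sum_mul, hp1, one_mul, H, shannonEntropy]
    ring
  have hatypical : ∀ x ∈ univ.filter fun x : Fin N → α =>
      (2 : ℝ) ^ (-(N * (H - ε))) < ∏ k, p (x k), N * ε ≤ ∑ k, (Real.logb 2 (p (x k)) + H) := by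
    intro x hx
    have hlog := lt_sum_logb_of_rpow_lt_prod (mem_filter.mp hx).2
    simp only [sum_add_distrib, sum_const, card_univ, Fintype.card_fin, nsmul_eq_mul] at hlog ⊢
    linarith
  calc _ ≤ (∑ x : Fin N → α, (∏ k, p (x k)) * (∑ k, (Real.logb 2 (p (x k)) + H)) ^ 2) /
          (N * ε) ^ 2 :=
        sum_le_sum_mul_sq_div_sq (fun x => prod_nonneg fun k _ => hp0 _) _ (by positivity)
          hatypical
    _ = varentropy p / (N * ε ^ 2) := by
        rw [sum_prod_mul_sum_sq_of_sum_mul_eq_zero hp1 hcentered, Fintype.card_fin, varentropy,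
          ← hH]
        field_simp

theorem sum_mul_prod_le {p : α → ℝ} (hp0 : ∀ a, 0 ≤ p a) (hp1 : ∑ a, p a = 1)
    {ε : ℝ} (hε : 0 < ε) {N : ℕ} (hN : 0 < N) {s : (Fin N → α) → ℝ}
    (hs : ∀ x, s x ∈ Set.Icc 0 1) (hsum : ∑ x, s x ≤ 2 ^ (N * (shannonEntropy p - 2 * ε))) :
    ∑ x, s x * ∏ k, p (x k) ≤ 2 ^ (-(N * ε)) + varentropy p / (N * ε ^ 2) := by
  set t : ℝ := -(N * (shannonEntropy p - ε)) with ht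
  rw [← sum_filter_not_add_sum_filter _ fun x => (2 : ℝ) ^ t < ∏ k, p (x k)]
  gcongr ?_ + ?_
  · calc _ ≤ ∑ x ∈ univ.filter fun x => ¬(2 : ℝ) ^ t < ∏ k, p (x k), s x * 2 ^ t := by
          refine sum_le_sum fun x hx => mul_le_mul_of_nonneg_left ?_ (hs x).1
          exact not_lt.mp (mem_filter.mp hx).2
      _ ≤ (∑ x, s x) * 2 ^ t := by
          rw [← sum_mul]
          exact mul_le_mul_of_nonneg_right
            (sum_le_sum_of_subset_of_nonneg (subset_univ _) fun x _ _ => (hs x).1) (by positivity)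
      _ ≤ 2 ^ (N * (shannonEntropy p - 2 * ε)) * 2 ^ t := by gcongr
      _ = 2 ^ (-(N * ε)) := by rw [← Real.rpow_add two_pos, ht]; ring_nf
  · refine (sum_le_sum fun x _ => ?_).trans (sum_prod_filter_rpow_lt_le hp0 hp1 hε hN)
    exact mul_le_of_le_one_left (prod_nonneg fun k _ => hp0 (x k)) (hs x).2

theorem tendsto_two_rpow_neg_mul_add_div_mul {ε : ℝ} (hε : 0 < ε) (V : ℝ) :
    Tendsto (fun N : ℕ => (2 : ℝ) ^ (-(N * ε)) + V / (N * ε ^ 2)) atTop (𝓝 0) := by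
  have hexp : (fun N : ℕ => (2 : ℝ) ^ (-(N * ε))) = fun N => ((2 : ℝ) ^ (-ε)) ^ N := by
    ext N
    rw [← Real.rpow_natCast, ← Real.rpow_mul zero_le_two]
    ring_nf
  have hdiv : (fun N : ℕ => V / (N * ε ^ 2)) = fun N : ℕ => V / ε ^ 2 / N := by
    ext N
    rw [div_div, mul_comm]
  rw [← add_zero (0 : ℝ)]
  refine Tendsto.add ?_ ?_
  · rw [hexp]
    exact tendsto_pow_atTop_nhds_zero_of_lt_one (by positivity)
      (Real.rpow_lt_one_of_one_lt_of_neg one_lt_two (neg_neg_of_pos hε))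
  · rw [hdiv]
    exact tendsto_const_div_atTop_nhds_zero_nat _

end Entropy

/-- Any sequence of projections of rank below `2^{NR}` with `R < S(ρ)` captures a vanishing
fraction of the weight of `ρ^{⊗N}`. -/
theorem small_projections_capture_little_weight (d : ℕ)
    (ρ : Matrix (Fin d) (Fin d) ℂ) (hρ : ρ.PosSemidef) (htr : ρ.trace = 1)
    (R : ℝ) (hR : R < vnEntropy hρ.1)
    (δ : ℝ) (hδ : 0 < δ) :
    ∃ N₀ : ℕ, ∀ N ≥ N₀,
      ∀ S_N : Matrix (Fin N → Fin d) (Fin N → Fin d) ℂ,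
        S_N.IsHermitian → S_N * S_N = S_N →
        (S_N.trace).re < (2 : ℝ) ^ ((N : ℝ) * R) →
        ((S_N * tpow ρ N).trace).re ≤ δ := by
  have hp1 : ∑ i, hρ.1.eigenvalues i = 1 := by
    simpa [Complex.ext_iff] using hρ.1.trace_eq_sum_eigenvalues.symm.trans htr
  set ε := (vnEntropy hρ.1 - R) / 2
  have hε : 0 < ε := half_pos (sub_pos.mpr hR)
  have hR' : R = shannonEntropy hρ.1.eigenvalues - 2 * ε := by
    simp only [ε, shannonEntropy, vnEntropy]; ring
  obtain ⟨N₀, hN₀⟩ := eventually_atTop.mp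
    ((tendsto_two_rpow_neg_mul_add_div_mul hε (varentropy hρ.1.eigenvalues)).eventually
      (ge_mem_nhds hδ))
  refine ⟨max N₀ 1, fun N hN S hS hSS hStr => ?_⟩
  obtain ⟨s, hs, hsum, htrace⟩ := exists_weights_of_isStarProjection hρ.1 ⟨hSS, hS⟩
  have hsum' : ∑ x, s x ≤ 2 ^ (N * (shannonEntropy hρ.1.eigenvalues - 2 * ε)) := by
    rw [hsum, ← hR']
    exact hStr.le
  rw [htrace]
  exact (sum_mul_prod_le hρ.eigenvalues_nonneg hp1 hε (by omega) hs hsum').trans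
    (hN₀ N (le_of_max_le_left hN))
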